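/- The 0-multiple-cover formula is stable under the substitution δ ↦ l₀δ followed by m_{l₀}: let f : ℕ≥1 → ℚ, let F(δ) = ∑_{k | δ} f(k)·T_k in 𝒢 for every δ ≥ 1, and fix an integer l₀ ≥ 1. Then for every δ ≥ 1, m_{l₀}(F(l₀·δ)) = ∑_{k | δ} ( ∑_{u | l₀, gcd(k, l₀/u) = 1} f(u·k) ) · T_k. -/

import Mathlib

/-!
Multiplication by `l` sends `T_N` to `T_{N / gcd(N, l)}`. Write `N = N' g`, `l = l' g` with `l'`
prime to `N'`, and parametrize the `N`-torsion of `G` by `(ℤ/N)^r`. Multiplication by `l` then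
becomes the surjective homomorphism `(ℤ/N)^r → (ℤ/N')^r`, `x ↦ l' (x mod N')`, whose fibres all
have `g^r` elements, which is exactly the ratio of the normalizations `N^{-r}` and `N'^{-r}`.
The formula then follows by grouping the divisors `k` of `l₀δ` according to `u = gcd(k, l₀)`:
`k = u k'` identifies them with the pairs `(k', u)`, `k' ∣ δ`, `u ∣ l₀`, `gcd(k', l₀/u) = 1`.
-/

noncomputable section

/-- `G = (ℝ/ℤ)^r`. -/
abbrev Gr (r : ℕ) : Type := Fin r → AddCircle (1 : ℝ)

/-- The group algebra `𝒢 = ℚ[G]`. -/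
abbrev GA (r : ℕ) : Type := AddMonoidAlgebra ℚ (Gr r)

/-- The multiplication operator `m_d`, the ℚ-linear operator determined by
`m_d((θ)) = (d • θ)`. -/
noncomputable def mulOp (r : ℕ) (d : ℤ) : GA r →ₗ[ℚ] GA r :=
  AddMonoidAlgebra.mapDomainLinearMap ℚ ℚ (fun θ : Gr r => d • θ)

/-- `T_n := n^{-r} • ∑_{τ : n • τ = 0} (τ)`, the average of the `n`-torsion
elements of `G`. -/
noncomputable def Tor (r n : ℕ) : GA r :=
  ((n : ℚ) ^ r)⁻¹ • ∑ᶠ τ ∈ {τ : Gr r | n • τ = 0}, AddMonoidAlgebra.single τ (1 : ℚ)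

open Function Finset

lemma AddMonoidHom.sum_comp_of_surjective {A B M : Type*} [AddGroup A] [AddGroup B] [Fintype A]
    [Fintype B] [DecidableEq B] [AddCommMonoid M] (φ : A →+ B) (hφ : Surjective φ) (h : B → M) :
    ∑ a, h (φ a) = Nat.card φ.ker • ∑ b, h b := by
  rw [sum_comp, image_univ_of_surjective hφ, smul_sum]
  refine sum_congr rfl fun b _ => ?_
  rw [← Nat.card_congr (φ.fiberEquivKerOfSurjective hφ b), Set.preimage, Nat.card_eq_fintype_card,
    Fintype.card_subtype]
  rfl

lemma AddMonoidHom.card_ker_mul_card_of_surjective {A B : Type*} [AddGroup A] [AddGroup B]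
    (φ : A →+ B) (hφ : Surjective φ) : Nat.card φ.ker * Nat.card B = Nat.card A := by
  rw [← Nat.card_congr (QuotientAddGroup.quotientKerEquivOfSurjective φ hφ).toEquiv,
    AddSubgroup.card_eq_card_quotient_mul_card_addSubgroup φ.ker, mul_comm]

lemma ZMod.range_toAddCircle (N : ℕ) [NeZero N] :
    Set.range (toAddCircle : ZMod N → UnitAddCircle) = {x | N • x = 0} := by
  ext x
  constructor
  · rintro ⟨j, rfl⟩
    simp [← map_nsmul]
  · intro hx
    obtain ⟨t, rfl⟩ := QuotientAddGroup.mk_surjective x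
    obtain ⟨m, hm⟩ := (AddCircle.coe_eq_zero_iff 1).mp ((AddCircle.coe_nsmul 1).trans hx)
    refine ⟨m, ?_⟩
    have hN : (N : ℝ) ≠ 0 := Nat.cast_ne_zero.mpr (NeZero.ne N)
    rw [toAddCircle_intCast]
    simp only [zsmul_eq_mul, mul_one, nsmul_eq_mul] at hm
    rw [hm, mul_div_cancel_left₀ t hN]

lemma ZMod.nsmul_toAddCircle (N g : ℕ) [NeZero N] [NeZero g] (x : ZMod (N * g)) :
    g • toAddCircle x = toAddCircle (castHom (dvd_mul_right N g) (ZMod N) x) := by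
  obtain ⟨j, rfl⟩ := intCast_surjective x
  have hg : (g : ℝ) ≠ 0 := Nat.cast_ne_zero.mpr (NeZero.ne g)
  rw [map_intCast (castHom (dvd_mul_right N g) (ZMod N)), toAddCircle_intCast,
    toAddCircle_intCast, ← AddCircle.coe_nsmul, nsmul_eq_mul, Nat.cast_mul, ← div_div,
    mul_div_cancel₀ _ hg]

def torsionEmb (r N : ℕ) [NeZero N] : (Fin r → ZMod N) →+ Gr r :=
  ZMod.toAddCircle.compLeft (Fin r)

lemma torsionEmb_injective (r N : ℕ) [NeZero N] : Injective (torsionEmb r N) :=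
  (ZMod.toAddCircle_injective N).comp_left

lemma range_torsionEmb (r N : ℕ) [NeZero N] :
    Set.range (torsionEmb r N) = {τ : Gr r | N • τ = 0} := by
  have h := ZMod.range_toAddCircle N
  simp only [Set.ext_iff, Set.mem_range, Set.mem_ofPred_eq] at h
  ext τ
  rw [Set.mem_ofPred_eq, funext_iff]
  constructor
  · rintro ⟨v, rfl⟩ i
    exact (h _).mp ⟨v i, rfl⟩
  · intro hτ
    choose v hv using fun i => (h (τ i)).mpr (hτ i)
    exact ⟨v, funext hv⟩

lemma Tor_eq_sum (r N : ℕ) [NeZero N] :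
    Tor r N = ((N : ℚ) ^ r)⁻¹ • ∑ v, AddMonoidAlgebra.single (torsionEmb r N v) 1 := by
  rw [Tor, ← range_torsionEmb, finsum_mem_range (torsionEmb_injective r N),
    finsum_eq_sum_of_fintype]

lemma mulOp_Tor_mul_of_coprime (r N g l : ℕ) [NeZero N] [NeZero g] (hl : l.Coprime N) :
    mulOp r ((l * g : ℕ) : ℤ) (Tor r (N * g)) = Tor r N := by
  let ψ : ZMod (N * g) →+ ZMod N := l • (ZMod.castHom (dvd_mul_right N g) (ZMod N)).toAddMonoidHom
  let Ψ := ψ.compLeft (Fin r)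
  have hψ : Surjective ψ := by
    intro y
    let u := ZMod.unitOfCoprime l hl
    obtain ⟨x, hx⟩ := ZMod.castHom_surjective (dvd_mul_right N g) (↑u⁻¹ * y)
    refine ⟨x, ?_⟩
    change l • ZMod.castHom (dvd_mul_right N g) (ZMod N) x = y
    rw [hx, nsmul_eq_mul, ← mul_assoc, ← ZMod.coe_unitOfCoprime l hl, Units.mul_inv, one_mul]
  have hΨ : Surjective Ψ := hψ.comp_left
  have hmul (v) : ((l * g : ℕ) : ℤ) • torsionEmb r (N * g) v = torsionEmb r N (Ψ v) := by
    funext i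
    rw [natCast_zsmul, Pi.smul_apply, mul_smul]
    change l • g • ZMod.toAddCircle (v i) =
      ZMod.toAddCircle (l • ZMod.castHom (dvd_mul_right N g) (ZMod N) (v i))
    rw [ZMod.nsmul_toAddCircle, map_nsmul]
  have hcard : Nat.card Ψ.ker * N ^ r = (N * g) ^ r := by
    simpa [Nat.card_fun, Nat.card_zmod] using Ψ.card_ker_mul_card_of_surjective hΨ
  calc mulOp r ((l * g : ℕ) : ℤ) (Tor r (N * g))
      = (((N * g : ℕ) : ℚ) ^ r)⁻¹ •
          ∑ v, AddMonoidAlgebra.single (torsionEmb r N (Ψ v)) (1 : ℚ) := by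
        simp only [Tor_eq_sum, map_smul, map_sum, mulOp,
          AddMonoidAlgebra.mapDomainLinearMap_single, hmul]
    _ = (((N * g : ℕ) : ℚ) ^ r)⁻¹ •
          (Nat.card Ψ.ker • ∑ w, AddMonoidAlgebra.single (torsionEmb r N w) (1 : ℚ)) := by
        rw [Ψ.sum_comp_of_surjective hΨ (fun w => AddMonoidAlgebra.single (torsionEmb r N w) 1)]
    _ = Tor r N := by
        rw [Tor_eq_sum, ← Nat.cast_smul_eq_nsmul ℚ, smul_smul]
        have hK : (Nat.card Ψ.ker : ℚ) ≠ 0 := Nat.cast_ne_zero.mpr Nat.card_pos.ne'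
        rw [← Nat.cast_pow, ← hcard]
        push_cast
        field_simp

lemma mulOp_Tor (r N l : ℕ) (hN : N ≠ 0) : mulOp r l (Tor r N) = Tor r (N / N.gcd l) := by
  obtain ⟨N', l', hco, hN', hl'⟩ := Nat.exists_coprime N l
  have hg : 0 < N.gcd l := Nat.gcd_pos_of_pos_left l (Nat.pos_of_ne_zero hN)
  set g := N.gcd l
  clear_value g
  subst hN' hl'
  have : NeZero g := ⟨hg.ne'⟩
  have : NeZero N' := ⟨left_ne_zero_of_mul hN⟩
  rw [Nat.mul_div_cancel _ hg]
  exact mulOp_Tor_mul_of_coprime r N' g l' hco.symm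

lemma Nat.gcd_mul_right_eq_of_coprime {u k a : ℕ} (hu : u ∣ a) (hk : k.Coprime (a / u)) :
    (u * k).gcd a = u := by
  conv_lhs => rw [← Nat.mul_div_cancel' hu]
  rw [Nat.gcd_mul_left, hk, mul_one]

lemma Nat.div_gcd_dvd_of_dvd_mul {k a b : ℕ} (hk : k ∣ a * b) (ha : a ≠ 0) : k / k.gcd a ∣ b :=
  (Nat.div_dvd_iff_dvd_mul (Nat.gcd_dvd_left k a) (Nat.gcd_pos_of_pos_right k ha.bot_lt)).mpr
    (dvd_gcd_mul_iff_dvd_mul.mpr hk)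

lemma Nat.sum_divisors_mul {M : Type*} [AddCommMonoid M] (a b : ℕ) (F : ℕ → M) :
    ∑ k ∈ (a * b).divisors, F k =
      ∑ k ∈ b.divisors, ∑ u ∈ a.divisors with k.gcd (a / u) = 1, F (u * k) := by
  rw [sum_sigma']
  refine sum_nbij' (fun k => ⟨k / k.gcd a, k.gcd a⟩) (fun p => p.2 * p.1) ?_ ?_ ?_ ?_ ?_
  · intro k hk
    simp only [Nat.mem_divisors, mem_sigma, mem_filter] at hk ⊢
    obtain ⟨hkab, hab⟩ := hk
    have ha : a ≠ 0 := left_ne_zero_of_mul hab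
    exact ⟨⟨Nat.div_gcd_dvd_of_dvd_mul hkab ha, right_ne_zero_of_mul hab⟩,
      ⟨Nat.gcd_dvd_right k a, ha⟩,
      Nat.coprime_div_gcd_div_gcd (Nat.gcd_pos_of_pos_right k ha.bot_lt)⟩
  · rintro ⟨k, u⟩ hp
    simp only [Nat.mem_divisors, mem_sigma, mem_filter] at hp ⊢
    exact ⟨mul_dvd_mul hp.2.1.1 hp.1.1, mul_ne_zero hp.2.1.2 hp.1.2⟩
  · intro k _
    exact Nat.mul_div_cancel' (Nat.gcd_dvd_left k a)
  · rintro ⟨k, u⟩ hp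
    simp only [Nat.mem_divisors, mem_sigma, mem_filter] at hp
    obtain ⟨-, ⟨hua, ha⟩, hk⟩ := hp
    simp only [Nat.gcd_mul_right_eq_of_coprime hua hk,
      Nat.mul_div_cancel_left k (Nat.pos_of_dvd_of_pos hua ha.bot_lt)]
  · intro k _
    simp only [Nat.mul_div_cancel' (Nat.gcd_dvd_left k a)]

theorem statement8_general (r : ℕ) (f : ℕ → ℚ) (l₀ δ : ℕ) :
    mulOp r (l₀ : ℤ) (∑ k ∈ (l₀ * δ).divisors, f k • Tor r k) =
      ∑ k ∈ δ.divisors,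
        (∑ u ∈ l₀.divisors.filter (fun u => Nat.gcd k (l₀ / u) = 1), f (u * k)) •
          Tor r k := by
  calc mulOp r (l₀ : ℤ) (∑ k ∈ (l₀ * δ).divisors, f k • Tor r k)
      = ∑ k ∈ (l₀ * δ).divisors, f k • Tor r (k / k.gcd l₀) := by
        rw [map_sum]
        refine sum_congr rfl fun k hk => ?_
        rw [map_smul, mulOp_Tor r k l₀ (Nat.pos_of_mem_divisors hk).ne']
    _ = ∑ k ∈ δ.divisors, ∑ u ∈ l₀.divisors with k.gcd (l₀ / u) = 1,
          f (u * k) • Tor r (u * k / (u * k).gcd l₀) :=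
        Nat.sum_divisors_mul l₀ δ _
    _ = _ := by
        refine sum_congr rfl fun k _ => ?_
        rw [sum_smul]
        refine sum_congr rfl fun u hu => ?_
        obtain ⟨hu, hk⟩ := mem_filter.mp hu
        rw [Nat.gcd_mul_right_eq_of_coprime (Nat.dvd_of_mem_divisors hu) hk,
          Nat.mul_div_cancel_left k (Nat.pos_of_mem_divisors hu)]

/-- The 0-multiple-cover formula is stable under `δ ↦ l₀δ` followed by `m_{l₀}`:
if `F(δ) = ∑_{k ∣ δ} f(k) • T_k` then
`m_{l₀}(F(l₀·δ)) = ∑_{k ∣ δ} (∑_{u ∣ l₀, gcd(k, l₀/u) = 1} f(u·k)) • T_k`. -/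
theorem statement8 (r : ℕ) (hr : 1 ≤ r) (f : ℕ → ℚ) (l₀ δ : ℕ)
    (hl₀ : 1 ≤ l₀) (hδ : 1 ≤ δ) :
    mulOp r (l₀ : ℤ) (∑ k ∈ (l₀ * δ).divisors, f k • Tor r k) =
      ∑ k ∈ δ.divisors,
        (∑ u ∈ l₀.divisors.filter (fun u => Nat.gcd k (l₀ / u) = 1), f (u * k)) •
          Tor r k :=
  statement8_general r f l₀ δ

end
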